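/- For a composition α of m of length N with all entries even, the cosquare of W_α satisfies W_α^{-T} W_α = -I_m + (2/N) Q_m 𝟙_{m×m}. -/

import Mathlib

open Matrix Finset

/-- The a×a strictly upper triangular matrix with all entries 1 above the diagonal,
viewed here through its m×m block-diagonal placements. -/
def Umat (m : ℕ) : Matrix (Fin m) (Fin m) ℝ :=
  Matrix.of fun i j => if (i : ℕ) < (j : ℕ) then 1 else 0

/-- The m×m diagonal matrix with alternating diagonal entries (+1,-1,+1,...). -/
def Qmat (m : ℕ) : Matrix (Fin m) (Fin m) ℝ :=
  Matrix.diagonal fun i => (-1 : ℝ) ^ (i : ℕ)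

/-- The all-ones m×m matrix. -/
def Jmat (m : ℕ) : Matrix (Fin m) (Fin m) ℝ :=
  Matrix.of fun _ _ => 1

/-- Offset of the i-th block: sum of the sizes of the preceding blocks. -/
def blockOff {N : ℕ} (α : Fin N → ℕ) (i : Fin N) : ℕ :=
  ∑ j ∈ Finset.univ.filter (fun j => j < i), α j

/-- The m×m block diagonal matrix `⊕_{i=1}^N (U_{α_i} - U_{α_i}ᵀ)` (for `m = Σ α_i`):
rows/columns `blockOff α i ≤ r,c < blockOff α i + α i` carry the i-th block
`U_{α_i} - U_{α_i}ᵀ`, whose (p,q) entry is 1 if p < q, -1 if p > q, 0 on the diagonal;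
all entries outside the diagonal blocks vanish. -/
def blockSkew {N : ℕ} (α : Fin N → ℕ) (m : ℕ) : Matrix (Fin m) (Fin m) ℝ :=
  Matrix.of fun r c =>
    if ∃ i : Fin N, blockOff α i ≤ (r : ℕ) ∧ (r : ℕ) < blockOff α i + α i ∧
        blockOff α i ≤ (c : ℕ) ∧ (c : ℕ) < blockOff α i + α i then
      (if (r : ℕ) < (c : ℕ) then 1 else if (c : ℕ) < (r : ℕ) then -1 else 0)
    else 0

/-- `W_α = (1/(2N)) ⊕_i (U_{α_i} - U_{α_i}ᵀ) + (1/(2N²)) 𝟙_{m×m}`. -/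
noncomputable def Wmat {N : ℕ} (α : Fin N → ℕ) (m : ℕ) : Matrix (Fin m) (Fin m) ℝ :=
  (1 / (2 * (N : ℝ))) • blockSkew α m + (1 / (2 * (N : ℝ) ^ 2)) • Jmat m

/-!
Write `S = ⊕ᵢ (U_{αᵢ} - U_{αᵢ}ᵀ)`, `Q = Q_m` and `J = 𝟙_{m×m}`, so that `W = S/(2N) + J/(2N²)` and
`Wᵀ = -S/(2N) + J/(2N²)`. Under `Fin m ≃ Σ i, Fin αᵢ` the matrix `S` is block diagonal, and since
every block starts at an even offset so is `Q`, with blocks `Q_{αᵢ}`. Alternating sums over a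
block of even length give `S Q S = Q` and `S Q J = -J`, and `J Q J = 0` because `m` is even.
These relations make `Q (-2N S + 2J) Q` a left inverse of `Wᵀ`, and multiplying it by `W`
gives `-1 + (2/N) Q J`.
-/

theorem sum_Ico_neg_one_pow {u v : ℕ} (h : u ≤ v) :
    ∑ k ∈ Ico u v, (-1 : ℝ) ^ k = ((-1) ^ u - (-1) ^ v) / 2 := by
  rw [geom_sum_Ico (by norm_num) h]; ring

theorem sum_univ_ite_mem_Ico_neg_one_pow {a u v : ℕ} (huv : u ≤ v) (hv : v ≤ a) :
    ∑ k : Fin a, (if (k : ℕ) ∈ Ico u v then (-1 : ℝ) ^ (k : ℕ) else 0) =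
      ((-1) ^ u - (-1) ^ v) / 2 := by
  rw [Fin.sum_univ_eq_sum_range (fun k => if k ∈ Ico u v then (-1 : ℝ) ^ k else 0),
    ← sum_filter, ← sum_Ico_neg_one_pow huv]
  congr 1
  ext k
  simp only [mem_filter, mem_range, mem_Ico]
  omega

section SingleBlock

variable {a : ℕ}

theorem Umat_sub_transpose_apply (p q : Fin a) :
    (Umat a - (Umat a)ᵀ) p q =
      (if (p : ℕ) < q then 1 else 0) - (if (q : ℕ) < p then 1 else 0) := by
  simp [Umat]

theorem Umat_sub_transpose_mul_Qmat_mulVec_one (ha : Even a) :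
    ((Umat a - (Umat a)ᵀ) * Qmat a) *ᵥ 1 = -1 := by
  funext p
  have key : ∀ k : Fin a,
      (Umat a - (Umat a)ᵀ) p k * (-1) ^ (k : ℕ) =
        (if (k : ℕ) ∈ Ico ((p : ℕ) + 1) a then (-1 : ℝ) ^ (k : ℕ) else 0) -
          (if (k : ℕ) ∈ Ico 0 (p : ℕ) then (-1 : ℝ) ^ (k : ℕ) else 0) := by
    intro k
    have := k.2
    simp only [Umat_sub_transpose_apply, mem_Ico]
    split_ifs <;> first | omega | ring
  simp only [mulVec, dotProduct, Qmat, mul_diagonal, Pi.one_apply, mul_one, Pi.neg_apply]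
  rw [sum_congr rfl fun k _ => key k, sum_sub_distrib,
    sum_univ_ite_mem_Ico_neg_one_pow p.2 le_rfl,
    sum_univ_ite_mem_Ico_neg_one_pow (Nat.zero_le _) p.2.le, pow_succ, ha.neg_one_pow]
  ring

theorem Umat_sub_transpose_mul_Qmat_mul_Umat_sub_transpose (ha : Even a) :
    (Umat a - (Umat a)ᵀ) * Qmat a * (Umat a - (Umat a)ᵀ) = Qmat a := by
  ext p q
  obtain ⟨l, hl⟩ : ∃ l, l = min (p : ℕ) q := ⟨_, rfl⟩
  obtain ⟨u, hu'⟩ : ∃ u, u = max (p : ℕ) q := ⟨_, rfl⟩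
  have hu : u < a := hu' ▸ max_lt p.2 q.2
  -- The two signs agree strictly between `l` and `u` and differ outside `[l, u]`.
  have key : ∀ k : Fin a,
      (Umat a - (Umat a)ᵀ) p k * (-1) ^ (k : ℕ) * (Umat a - (Umat a)ᵀ) k q =
        (if (k : ℕ) ∈ Ico (l + 1) u then (-1 : ℝ) ^ (k : ℕ) else 0) -
          (if (k : ℕ) ∈ Ico 0 l then (-1 : ℝ) ^ (k : ℕ) else 0) -
          (if (k : ℕ) ∈ Ico (u + 1) a then (-1 : ℝ) ^ (k : ℕ) else 0) := by
    intro k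
    have := k.2
    simp only [Umat_sub_transpose_apply, mem_Ico]
    split_ifs <;> first | omega | ring
  rw [mul_apply]
  simp only [Qmat, mul_diagonal]
  rw [sum_congr rfl fun k _ => key k, sum_sub_distrib, sum_sub_distrib,
    sum_univ_ite_mem_Ico_neg_one_pow (Nat.zero_le _) (by omega),
    sum_univ_ite_mem_Ico_neg_one_pow hu le_rfl, ha.neg_one_pow]
  rcases eq_or_ne p q with rfl | hpq
  · rw [sum_eq_zero fun k _ => if_neg (by rw [mem_Ico]; omega), diagonal_apply_eq, hl, hu',
      min_self, max_self, pow_succ]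
    ring
  · have hlu : l + 1 ≤ u := by omega
    rw [sum_univ_ite_mem_Ico_neg_one_pow hlu hu.le, diagonal_apply_ne _ hpq, pow_succ, pow_succ]
    ring

end SingleBlock

theorem Matrix.blockDiagonal'_mulVec {R o : Type*} [NonUnitalNonAssocSemiring R] [Fintype o]
    [DecidableEq o] {m' n' : o → Type*} [∀ i, Fintype (n' i)]
    (M : ∀ i, Matrix (m' i) (n' i) R) (v : (Σ i, n' i) → R) (x : Σ i, m' i) :
    (blockDiagonal' M *ᵥ v) x = (M x.1 *ᵥ fun q => v ⟨x.1, q⟩) x.2 := by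
  obtain ⟨i, p⟩ := x
  simp only [mulVec, dotProduct, Fintype.sum_sigma, blockDiagonal'_apply]
  rw [Fintype.sum_eq_single i fun j hj => sum_eq_zero fun q _ => by simp [Ne.symm hj]]
  simp

section Blocks

variable {N : ℕ} (α : Fin N → ℕ)

theorem coe_finSigmaFinEquiv (x : (i : Fin N) × Fin (α i)) :
    (finSigmaFinEquiv x : ℕ) = blockOff α x.1 + x.2 := by
  have : univ.filter (· < x.1) = univ.map (Fin.castLEEmb x.1.2.le) := by
    ext j
    simp only [mem_filter, mem_univ, true_and, mem_map, Fin.castLEEmb_apply]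
    exact ⟨fun h => ⟨⟨j, h⟩, rfl⟩, by rintro ⟨i, rfl⟩; exact i.2⟩
  rw [finSigmaFinEquiv_apply, blockOff, this, sum_map]
  rfl

theorem blockOff_le_finSigmaFinEquiv_and_lt_iff (x : (i : Fin N) × Fin (α i)) (i : Fin N) :
    (blockOff α i ≤ finSigmaFinEquiv x ∧ (finSigmaFinEquiv x : ℕ) < blockOff α i + α i) ↔
      i = x.1 := by
  constructor
  · rintro ⟨h₁, h₂⟩
    let y : (i : Fin N) × Fin (α i) := ⟨i, finSigmaFinEquiv x - blockOff α i, by omega⟩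
    have : finSigmaFinEquiv y = finSigmaFinEquiv x := by
      ext
      rw [coe_finSigmaFinEquiv α y]
      simp only [y]
      omega
    exact congrArg Sigma.fst (finSigmaFinEquiv.injective this)
  · rintro rfl
    rw [coe_finSigmaFinEquiv]
    omega

theorem blockSkew_eq_reindex :
    blockSkew α (∑ i, α i) = reindexAlgEquiv ℝ ℝ finSigmaFinEquiv
      (blockDiagonal' fun i => Umat (α i) - (Umat (α i))ᵀ) := by
  ext r c
  obtain ⟨⟨i, p⟩, rfl⟩ := finSigmaFinEquiv.surjective r
  obtain ⟨⟨j, q⟩, rfl⟩ := finSigmaFinEquiv.surjective c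
  have hsame : (∃ k : Fin N,
      blockOff α k ≤ (finSigmaFinEquiv ⟨i, p⟩ : ℕ) ∧
        (finSigmaFinEquiv ⟨i, p⟩ : ℕ) < blockOff α k + α k ∧
      blockOff α k ≤ (finSigmaFinEquiv ⟨j, q⟩ : ℕ) ∧
        (finSigmaFinEquiv ⟨j, q⟩ : ℕ) < blockOff α k + α k) ↔ i = j := by
    constructor
    · rintro ⟨k, h₁, h₂, h₃, h₄⟩
      exact ((blockOff_le_finSigmaFinEquiv_and_lt_iff α _ k).1 ⟨h₁, h₂⟩).symm.trans
        ((blockOff_le_finSigmaFinEquiv_and_lt_iff α _ k).1 ⟨h₃, h₄⟩)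
    · rintro rfl
      obtain ⟨h₁, h₂⟩ := (blockOff_le_finSigmaFinEquiv_and_lt_iff α ⟨i, p⟩ i).2 rfl
      obtain ⟨h₃, h₄⟩ := (blockOff_le_finSigmaFinEquiv_and_lt_iff α ⟨i, q⟩ i).2 rfl
      exact ⟨i, h₁, h₂, h₃, h₄⟩
  rw [coe_reindexAlgEquiv, reindex_apply, submatrix_apply, Equiv.symm_apply_apply,
    Equiv.symm_apply_apply, blockSkew, of_apply, if_congr hsame rfl rfl]
  rcases eq_or_ne i j with rfl | hij
  · rw [if_pos rfl, blockDiagonal'_apply_eq, Umat_sub_transpose_apply, coe_finSigmaFinEquiv,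
      coe_finSigmaFinEquiv]
    simp only [add_lt_add_iff_left]
    split_ifs <;> first | omega | ring
  · rw [if_neg hij, blockDiagonal'_apply_ne _ _ _ hij]

theorem Qmat_eq_reindex (heven : ∀ i, Even (α i)) :
    Qmat (∑ i, α i) = reindexAlgEquiv ℝ ℝ finSigmaFinEquiv
      (blockDiagonal' fun i => Qmat (α i)) := by
  simp only [Qmat, blockDiagonal'_diagonal, coe_reindexAlgEquiv, reindex_apply,
    submatrix_diagonal_equiv]
  congr 1
  funext r
  obtain ⟨x, rfl⟩ := finSigmaFinEquiv.surjective r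
  have hoff : Even (blockOff α x.1) := even_sum _ fun k _ => heven k
  rw [Function.comp_apply, Equiv.symm_apply_apply, coe_finSigmaFinEquiv, pow_add,
    hoff.neg_one_pow, one_mul]

theorem blockSkew_transpose : (blockSkew α (∑ i, α i))ᵀ = -blockSkew α (∑ i, α i) := by
  rw [blockSkew_eq_reindex, ← map_neg, coe_reindexAlgEquiv, transpose_reindex,
    blockDiagonal'_transpose, ← blockDiagonal'_neg]
  congr 2
  funext i
  rw [Pi.neg_apply, transpose_sub, transpose_transpose, neg_sub]

variable {α}

theorem blockSkew_mul_Qmat_mul_blockSkew (heven : ∀ i, Even (α i)) :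
    blockSkew α (∑ i, α i) * Qmat (∑ i, α i) * blockSkew α (∑ i, α i) = Qmat (∑ i, α i) := by
  rw [blockSkew_eq_reindex, Qmat_eq_reindex α heven, ← map_mul, ← map_mul, ← blockDiagonal'_mul,
    ← blockDiagonal'_mul]
  simp only [Umat_sub_transpose_mul_Qmat_mul_Umat_sub_transpose (heven _)]

theorem blockSkew_mul_Qmat_mulVec_one (heven : ∀ i, Even (α i)) :
    (blockSkew α (∑ i, α i) * Qmat (∑ i, α i)) *ᵥ 1 = -1 := by
  rw [blockSkew_eq_reindex, Qmat_eq_reindex α heven, ← map_mul, ← blockDiagonal'_mul,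
    coe_reindexAlgEquiv, reindex_apply, submatrix_mulVec_equiv]
  funext r
  obtain ⟨⟨i, p⟩, rfl⟩ := finSigmaFinEquiv.surjective r
  rw [Function.comp_apply, Equiv.symm_apply_apply, blockDiagonal'_mulVec]
  exact congrFun (Umat_sub_transpose_mul_Qmat_mulVec_one (heven i)) p

end Blocks

theorem isUnit_and_transpose_inv_mul_of_relations {n : Type*} [Fintype n] [DecidableEq n]
    {S Q J : Matrix n n ℝ} {c : ℝ} (hc : c ≠ 0)
    (hS : Sᵀ = -S) (hQ : Qᵀ = Q) (hJ : Jᵀ = J) (hQQ : Q * Q = 1)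
    (hSQS : S * Q * S = Q) (hSQJ : S * Q * J = -J) (hJQJ : J * Q * J = 0) :
    IsUnit ((1 / (2 * c)) • S + (1 / (2 * c ^ 2)) • J) ∧
      (((1 / (2 * c)) • S + (1 / (2 * c ^ 2)) • J)ᵀ)⁻¹ *
          ((1 / (2 * c)) • S + (1 / (2 * c ^ 2)) • J) =
        -1 + (2 / c) • (Q * J) := by
  have hJQS : J * Q * S = J := by
    have := congrArg transpose hSQJ
    rwa [transpose_mul, transpose_mul, hS, hQ, hJ, transpose_neg, hJ, mul_neg, mul_neg, neg_inj,
      ← Matrix.mul_assoc] at this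
  simp only [Matrix.mul_assoc] at hSQS hSQJ hJQS hJQJ
  have hWT : ((1 / (2 * c)) • S + (1 / (2 * c ^ 2)) • J)ᵀ =
      (-(1 / (2 * c))) • S + (1 / (2 * c ^ 2)) • J := by
    rw [transpose_add, transpose_smul, transpose_smul, hS, hJ, smul_neg, neg_smul]
  -- The relations make `Q (-2c S + 2J) Q` a left inverse of the transpose.
  have hleft : Q * ((-(2 * c)) • S + (2 : ℝ) • J) * Q *
      ((1 / (2 * c)) • S + (1 / (2 * c ^ 2)) • J)ᵀ = 1 := by
    rw [hWT]
    simp only [Matrix.mul_assoc, add_mul, mul_add, smul_mul_assoc, mul_smul_comm, hSQS, hSQJ,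
      hJQS, hJQJ, hQQ, mul_neg, mul_zero, smul_neg, smul_zero]
    match_scalars <;> grind
  refine ⟨?_, ?_⟩
  · rw [← isUnit_transpose, isUnit_iff_isUnit_det]
    exact isUnit_det_of_left_inverse hleft
  · rw [inv_eq_left_inv hleft]
    simp only [Matrix.mul_assoc, add_mul, mul_add, smul_mul_assoc, mul_smul_comm, hSQS, hSQJ,
      hJQS, hJQJ, hQQ, mul_neg, mul_zero, smul_neg, smul_zero]
    match_scalars <;> grind

section AllOnes

variable {m : ℕ}

theorem mul_Jmat_apply (M : Matrix (Fin m) (Fin m) ℝ) (r c : Fin m) :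
    (M * Jmat m) r c = (M *ᵥ 1) r := by
  simp [Jmat, mul_apply, mulVec, dotProduct]

theorem Qmat_mul_self : Qmat m * Qmat m = 1 := by
  rw [Qmat, diagonal_mul_diagonal, ← diagonal_one]
  congr 1
  funext i
  rw [← pow_add, ← two_mul, pow_mul, neg_one_sq, one_pow]

theorem Jmat_mul_Qmat_mul_Jmat (hm : Even m) : Jmat m * Qmat m * Jmat m = 0 := by
  ext r c
  rw [mul_Jmat_apply]
  simp only [mulVec, dotProduct, Jmat, Qmat, mul_diagonal, of_apply, one_mul, Pi.one_apply,
    mul_one, Matrix.zero_apply]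
  rw [Fin.sum_univ_eq_sum_range (fun k => (-1 : ℝ) ^ k), range_eq_Ico, sum_Ico_neg_one_pow
    (Nat.zero_le _), hm.neg_one_pow]
  simp

end AllOnes

theorem Wmat_cosquare_general (N m : ℕ) (hN : 0 < N) (α : Fin N → ℕ)
    (heven : ∀ i, Even (α i)) (hm : ∑ i, α i = m) :
    IsUnit (Wmat α m) ∧
      ((Wmat α m)ᵀ)⁻¹ * Wmat α m = -1 + ((2 : ℝ) / (N : ℝ)) • (Qmat m * Jmat m) := by
  subst hm
  have hSQJ : blockSkew α _ * Qmat _ * Jmat _ = -Jmat (∑ i, α i) := by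
    ext r c
    rw [mul_Jmat_apply, blockSkew_mul_Qmat_mulVec_one heven]
    rfl
  exact isUnit_and_transpose_inv_mul_of_relations (Nat.cast_ne_zero.2 hN.ne')
    (blockSkew_transpose α) (diagonal_transpose _) rfl Qmat_mul_self
    (blockSkew_mul_Qmat_mul_blockSkew heven) hSQJ
    (Jmat_mul_Qmat_mul_Jmat (even_sum _ fun i _ => heven i))

/-- For a composition `α` of `m` of length `N` with all entries even, the cosquare of
`W_α` satisfies `W_α⁻ᵀ W_α = -I_m + (2/N) Q_m 𝟙_{m×m}`. -/
theorem Wmat_cosquare (N m : ℕ) (hN : 0 < N) (α : Fin N → ℕ)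
    (hpos : ∀ i, 0 < α i) (heven : ∀ i, Even (α i)) (hm : ∑ i, α i = m) :
    IsUnit (Wmat α m) ∧
      ((Wmat α m)ᵀ)⁻¹ * Wmat α m = -1 + ((2 : ℝ) / (N : ℝ)) • (Qmat m * Jmat m) :=
  Wmat_cosquare_general N m hN α heven hm
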